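/- arXiv:1905.08202 — 2 statements merged into one kernel-verified Lean document; each statement's English description precedes it below -/
import Mathlib

section
/- Let X denote the lexicographic product ω₁ ×ₗ ℚ, and let m ≥ 2. Then the set of based functions f : X → ℕ with f(x) < m for all x has cardinality exactly ℵ₁. -/
/-!
A based function `f` with values below `m` is determined by the data, for each `n < m`, of
whether the fiber `f ⁻¹' {n}` is nonempty and of its least element, if any. Indeed, if
`f x < g x` and both carry the same data at `n = f x`, then either the fiber of `f` has a least
element `b ≤ x`, which then lies in the fiber of `g`, so `g x ≤ g b = n`; or the fiber of `g` has
no least element, hence is a nonempty initial segment, which contains `x` or some `a ≥ x`. So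
there are at most `(2 · (#X + 1)) ^ m = #X` such functions on an infinite `X`, while the
functions equal to `1` below `a` and `0` from `a` on give `#X` distinct ones once `m ≥ 2`.
-/

/-- The linearly ordered set `ω₁` of countable ordinals, realized as the canonical type
of order type `ω₁ = (ℵ₁).ord`. -/
abbrev OmegaOne : Type := (Cardinal.aleph 1).ord.ToType

/-- The lexicographic product `ω₁ ×ₗ ℚ`. -/
abbrev KrivineX : Type := OmegaOne ×ₗ ℚ

/-- A function `f : X → ℕ` on a linear order `X` is *based* if it is antitone and
every nonempty fiber `f ⁻¹' {n}` either has a least element or is downward closed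
(an initial segment of `X`). -/
def Based {X : Type*} [LinearOrder X] (f : X → ℕ) : Prop :=
  Antitone f ∧ ∀ n : ℕ, (f ⁻¹' {n}).Nonempty →
    (∃ b, IsLeast (f ⁻¹' {n}) b) ∨ ∀ x ∈ f ⁻¹' {n}, ∀ y ≤ x, y ∈ f ⁻¹' {n}

open Cardinal Set

namespace Set

variable {X : Type*} [PartialOrder X] {s : Set X} {b : X}

open Classical in
noncomputable def leastOpt (s : Set X) : Option X :=
  if h : ∃ b, IsLeast s b then some h.choose else none

theorem leastOpt_eq_some_iff : s.leastOpt = some b ↔ IsLeast s b := by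
  unfold leastOpt
  split_ifs with h
  · exact ⟨fun hb => Option.some_injective _ hb ▸ h.choose_spec,
      fun hb => congrArg some (h.choose_spec.unique hb)⟩
  · simpa using fun hb => h ⟨b, hb⟩

theorem leastOpt_eq_none_iff : s.leastOpt = none ↔ ¬∃ b, IsLeast s b := by
  unfold leastOpt
  split_ifs with h <;> simp [h]

end Set

section Based

variable {X : Type*} [LinearOrder X]

theorem Based.le_of_leastOpt_eq {f g : X → ℕ} (hg : Based g) {x : X}
    (hne : (g ⁻¹' {f x}).Nonempty)
    (hleast : (f ⁻¹' {f x}).leastOpt = (g ⁻¹' {f x}).leastOpt) : g x ≤ f x := by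
  by_contra! hlt
  cases hb : (f ⁻¹' {f x}).leastOpt with
  | some b =>
    have hfb : IsLeast (f ⁻¹' {f x}) b := leastOpt_eq_some_iff.mp hb
    have hgb : IsLeast (g ⁻¹' {f x}) b := leastOpt_eq_some_iff.mp (hleast ▸ hb)
    have : g x ≤ g b := hg.1 (hfb.2 rfl)
    rw [hgb.1] at this
    omega
  | none =>
    have hno : ¬∃ b, IsLeast (g ⁻¹' {f x}) b := leastOpt_eq_none_iff.mp (hleast ▸ hb)
    obtain ⟨a, ha : g a = f x⟩ := hne
    rcases le_total a x with hax | hxa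
    · have := hg.1 hax
      omega
    · have : g x = f x := ((hg.2 _ ⟨a, ha⟩).resolve_left hno) a ha x hxa
      omega

noncomputable def fiberData (f : X → ℕ) (n : ℕ) : Prop × Option X :=
  ((f ⁻¹' {n}).Nonempty, (f ⁻¹' {n}).leastOpt)

theorem Based.eq_of_fiberData_eq {f g : X → ℕ} {m : ℕ} (hf : Based f) (hg : Based g)
    (hfm : ∀ x, f x < m) (hgm : ∀ x, g x < m) (h : ∀ n < m, fiberData f n = fiberData g n) :
    f = g := by
  have hfg : ∀ x, g x ≤ f x := fun x => by
    obtain ⟨hne, hleast⟩ := Prod.ext_iff.mp (h (f x) (hfm x))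
    exact hg.le_of_leastOpt_eq ((iff_of_eq hne).mp ⟨x, rfl⟩) hleast
  have hgf : ∀ x, f x ≤ g x := fun x => by
    obtain ⟨hne, hleast⟩ := Prod.ext_iff.mp (h (g x) (hgm x))
    exact hf.le_of_leastOpt_eq ((iff_of_eq hne).mpr ⟨x, rfl⟩) hleast.symm
  exact funext fun x => le_antisymm (hgf x) (hfg x)

theorem mk_based_lt_le [Infinite X] (m : ℕ) :
    #{f : X → ℕ | Based f ∧ ∀ x, f x < m} ≤ #X := by
  have hinj : Function.Injective
      fun (f : {f : X → ℕ | Based f ∧ ∀ x, f x < m}) (n : Fin m) => fiberData f.1 n :=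
    fun f g h => Subtype.ext <| f.2.1.eq_of_fiberData_eq g.2.1 f.2.2 g.2.2 fun n hn =>
      congrFun h ⟨n, hn⟩
  have hX : ℵ₀ ≤ #X := aleph0_le_mk X
  calc #{f : X → ℕ | Based f ∧ ∀ x, f x < m}
      ≤ #(Fin m → Prop × Option X) := mk_le_of_injective hinj
    _ = #(Prop × Option X) ^ m := by simp
    _ = #X ^ m := by
      simp [add_one_eq hX, Cardinal.mul_eq_right hX (ofNat_lt_aleph0.le.trans hX) two_ne_zero]
    _ ≤ #X := power_nat_le hX

theorem based_ite_lt (a : X) : Based fun x => if x < a then 1 else 0 := by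
  refine ⟨fun x y hxy => ?_, fun n hn => ?_⟩
  · by_cases hy : y < a
    · simp [hy, hxy.trans_lt hy]
    · simp [hy]
  · by_cases ha : a ∈ (fun x => if x < a then 1 else 0) ⁻¹' {n}
    · refine .inl ⟨a, ha, fun x hx => not_lt.mp fun hxa => ?_⟩
      simp only [mem_preimage, mem_singleton_iff, lt_irrefl, if_false, if_pos hxa] at ha hx
      omega
    · refine .inr fun x hx y hyx => ?_
      have hxa : x < a := not_le.mp fun hax => ha (by simp_all [not_lt.mpr hax])
      simp_all [hyx.trans_lt hxa]

theorem mk_le_mk_based_lt {m : ℕ} (hm : 2 ≤ m) :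
    #X ≤ #{f : X → ℕ | Based f ∧ ∀ x, f x < m} := by
  refine mk_le_of_injective (f := fun a => ⟨_, based_ite_lt a, fun x => ?_⟩) fun a b hab => ?_
  · split_ifs <;> omega
  · have h := congrFun (congrArg Subtype.val hab)
    have hba : ¬a < b := by simpa using (h a).symm
    have hab : ¬b < a := by simpa using h b
    exact le_antisymm (not_lt.mp hab) (not_lt.mp hba)

end Based

theorem mk_krivineX : #KrivineX = ℵ₁ := by
  change #(OmegaOne × ℚ) = ℵ₁
  rw [mk_prod, mk_toType, card_ord, mk_denumerable, lift_id, lift_aleph0,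
    mul_eq_left (aleph0_le_aleph 1) (aleph0_le_aleph 1) aleph0_ne_zero]

theorem mk_based_eq_aleph_one (m : ℕ) (hm : 2 ≤ m) :
    Cardinal.mk {f : KrivineX → ℕ | Based f ∧ ∀ x, f x < m} = Cardinal.aleph 1 := by
  have : Infinite KrivineX := infinite_iff.mpr (mk_krivineX ▸ aleph0_le_aleph 1)
  exact (le_antisymm (mk_based_lt_le m) (mk_le_mk_based_lt hm)).trans mk_krivineX
end

section
/- Let X denote the lexicographic product ω₁ ×ₗ ℚ. The group of order automorphisms of X acts transitively: for all x, y ∈ X there exists an order isomorphism π : X ≃o X with π(x) = y. -/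
open Set Cardinal Ordinal

theorem nonempty_Ioi_orderIso_of_ord_mk_eq {α : Type*} [LinearOrder α] [WellFoundedLT α]
    [Infinite α] (h : ord #α = typeLT α) (a : α) : Nonempty (Ioi a ≃o α) := by
  have hcard : #(Ioi a) = #α := by
    rw [← compl_Iic, mk_compl_of_infinite _ (mk_Iic_lt a h (aleph0_le_mk α))]
  have htype : typeLT (Ioi a) = typeLT α :=
    (RelEmbedding.ofMonotone Subtype.val (by simp)).ordinal_type_le.antisymm
      (by rw [← h, ord_le, card_type, hcard])
  exact ⟨.ofRelIsoLT (type_eq.1 htype).some⟩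

instance : Infinite OmegaOne := infinite_iff.2 (by simp)

theorem OmegaOne.ord_mk_eq : ord #OmegaOne = typeLT OmegaOne := by simp

theorem OmegaOne.countable_Iic (a : OmegaOne) : (Iic a).Countable := by
  rw [← le_aleph0_iff_set_countable, ← lt_aleph_one_iff]
  simpa using mk_Iic_lt a OmegaOne.ord_mk_eq (by simp)

theorem nonempty_Ici_orderIso_Ici {G : Type*} [AddCommGroup G] [LinearOrder G]
    [IsOrderedAddMonoid G] (a b : G) : Nonempty (Ici a ≃o Ici b) :=
  ⟨((OrderIso.addRight (b - a)).Ici a).trans (.setCongr _ _ (by simp))⟩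

def OrderIso.prodLexCongr {α₁ α₂ β₁ β₂ : Type*} [Preorder α₁] [Preorder α₂]
    [Preorder β₁] [Preorder β₂] (ea : α₁ ≃o α₂) (eb : β₁ ≃o β₂) : α₁ ×ₗ β₁ ≃o α₂ ×ₗ β₂ where
  toEquiv := ofLex.trans ((Equiv.prodCongr ea eb).trans toLex)
  map_rel_iff' {a b} := by
    induction a using Lex.rec
    induction b using Lex.rec
    simp [Prod.Lex.toLex_le_toLex]

namespace Prod.Lex

variable {α β : Type*} [LinearOrder α] [LinearOrder β]

theorem countable_Iio [Countable β] {x : α ×ₗ β} (h : (Iic (ofLex x).1).Countable) :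
    (Iio x).Countable := by
  refine ((h.prod countable_univ).image toLex).mono fun z hz => ?_
  refine ⟨ofLex z, ⟨?_, trivial⟩, rfl⟩
  rcases Prod.Lex.lt_iff.1 hz with hlt | ⟨heq, -⟩
  · exact hlt.le
  · exact heq.le

noncomputable def sumLexIciIoi (a : α) (q : β) :
    Ici q ⊕ₗ (Ioi a ×ₗ β) ≃o Ici (toLex (a, q)) := by
  refine StrictMono.orderIsoOfSurjective
    (fun u => Sum.elim (fun s => ⟨toLex (a, s.1), toLex_le_toLex.2 (.inr ⟨rfl, s.2⟩)⟩)
      (fun p => ⟨toLex ((ofLex p).1.1, (ofLex p).2), toLex_le_toLex.2 (.inl (ofLex p).1.2)⟩)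
      (ofLex u)) ?_ ?_
  · simp_rw [StrictMono, Lex.forall]
    rintro (s | p) (s' | p') h
    · have hs : s < s' := Sum.Lex.inl_lt_inl_iff.1 h
      exact Subtype.mk_lt_mk.2 (toLex_lt_toLex.2 (.inr ⟨rfl, hs⟩))
    · exact Subtype.mk_lt_mk.2 (toLex_lt_toLex.2 (.inl (ofLex p').1.2))
    · exact absurd h Sum.Lex.not_inr_lt_inl
    · exact Subtype.mk_lt_mk.2
        (by simpa [Prod.Lex.lt_iff, Subtype.coe_inj] using Sum.Lex.inr_lt_inr_iff.1 h)
  · rintro ⟨⟨c, t⟩, hz⟩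
    rcases toLex_le_toLex.1 hz with hc | ⟨rfl, ht⟩
    · exact ⟨toLex (.inr (toLex (⟨c, hc⟩, t))), rfl⟩
    · exact ⟨toLex (.inl ⟨t, ht⟩), rfl⟩

noncomputable def iciCongr {a b : α} {q r : β} (e : Ioi a ≃o Ioi b) (f : Ici q ≃o Ici r) :
    Ici (toLex (a, q)) ≃o Ici (toLex (b, r)) :=
  (sumLexIciIoi a q).symm.trans ((f.sumLexCongr (e.prodLexCongr (.refl β))).trans
    (sumLexIciIoi b r))

end Prod.Lex

namespace OrderIso

variable {α : Type*} [LinearOrder α] {x y : α}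

def ofIioIci (F : Iio x ≃o Iio y) (G : Ici x ≃o Ici y) : α ≃o α :=
  (sumLexIioIci x).symm.trans ((F.sumLexCongr G).trans (sumLexIioIci y))

theorem ofIioIci_apply_self (F : Iio x ≃o Iio y) (G : Ici x ≃o Ici y) : ofIioIci F G x = y := by
  simp only [ofIioIci, trans_apply, sumLexIioIci_symm_apply_of_ge le_rfl, sumLexCongr_apply]
  exact congrArg Subtype.val G.map_bot

end OrderIso

theorem orderAut_transitive (x y : KrivineX) :
    ∃ π : KrivineX ≃o KrivineX, π x = y := by
  have (z : KrivineX) : Countable (Iio z) :=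
    (Prod.Lex.countable_Iio (OmegaOne.countable_Iic _)).to_subtype
  obtain ⟨F⟩ := Order.iso_of_countable_dense (Iio x) (Iio y)
  obtain ⟨ex⟩ := nonempty_Ioi_orderIso_of_ord_mk_eq OmegaOne.ord_mk_eq (ofLex x).1
  obtain ⟨ey⟩ := nonempty_Ioi_orderIso_of_ord_mk_eq OmegaOne.ord_mk_eq (ofLex y).1
  obtain ⟨f⟩ := nonempty_Ici_orderIso_Ici (ofLex x).2 (ofLex y).2
  exact ⟨_, OrderIso.ofIioIci_apply_self F (Prod.Lex.iciCongr (ex.trans ey.symm) f)⟩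
end
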